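/- Proposition S2 (equivalence with covariates in stratified randomized experiments): (a) For data (z_i, c_i, x_i, y_i), i = 1,...,n, with u_i = (x_iᵀ, y_iᵀ)ᵀ, u = (u_1,...,u_n)ᵀ, uᵀ(I_n − H_g)u invertible, and zᵀ(I_n − H_g)z ≠ 0, the stacked inverse regression coefficient satisfies β̂_SRU,A = {n^{-1} zᵀ(I_n − H_g) z}{n^{-1} uᵀ(I_n − H_g) u}^{-1} τ̂_SRU. (b) Under stratified randomization, i.e., Z independent of (Y(1), Y(0), X) given C, with π_s = P(C=s) > 0, p_[s] = P(Z=1|C=s) ∈ (0,1), and E{cov(U | C)} invertible for U = (Xᵀ, Yᵀ)ᵀ, the population coefficients satisfy β_SRU,A = E{var(Z | C)} E{cov(U | C)}^{-1} τ_SRU, where E{var(Z | C)} = Σ_s π_s p_[s](1−p_[s]). -/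

import Mathlib

open MeasureTheory ProbabilityTheory Matrix Finset

/-!
Part (a) is pure rescaling, since `τ̂_SRU = uᵀ(I - H_g)z / zᵀ(I - H_g)z`.

In part (b) the population coefficient is in Frisch–Waugh–Lovell form `E[Ũ Ũᵀ]⁻¹ E[Ũ Z]`
with `Ũ = U - E(U | C)`. Averaging over the finitely many strata (law of total expectation),
`E[Ũ Ũᵀ] = E{cov(U | C)}`, and `E[Ũ Z] = E[(Z - E(Z | C)) U]` because within each stratum both
sides are the covariance of `U` and `Z`; the latter is `E{var(Z | C)} τ_SRU` by definition of
`τ_SRU`. Finally `var(Z | C = s) = p_[s](1 - p_[s])` since `Z` is Bernoulli given `C = s`.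
-/

theorem Matrix.inv_mulVec_eq_smul_inv_smul_mulVec {m 𝕜 : Type*} [Fintype m] [DecidableEq m]
    [Field 𝕜] {A : Matrix m m 𝕜} (hA : IsUnit A.det) (v : m → 𝕜) {c d : 𝕜} (hc : c ≠ 0)
    (hd : d ≠ 0) : A⁻¹ *ᵥ v = (c * d) • ((c • A)⁻¹ *ᵥ (d⁻¹ • v)) := by
  have hinv : (c • A)⁻¹ = c⁻¹ • A⁻¹ :=
    inv_eq_left_inv (by simp [hc, smul_smul, nonsing_inv_mul _ hA])
  rw [hinv, mulVec_smul, smul_mulVec, smul_smul, smul_smul]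
  simp [hc, hd]

section

variable {Ω : Type*} [MeasurableSpace Ω] {μ : Measure Ω}

theorem MeasureTheory.MemLp.cond {E : Type*} [NormedAddCommGroup E] {p : ENNReal} {f : Ω → E}
    (hf : MemLp f p μ) (s : Set Ω) : MemLp f p μ[|s] := by
  by_cases hs : μ s = 0
  · simp [cond_eq_zero_of_meas_eq_zero hs]
  · exact (hf.restrict s).smul_measure (ENNReal.inv_ne_top.2 hs)

theorem MeasureTheory.MemLp.finAppend {E : Type*} [NormedAddCommGroup E] {K L : ℕ}
    {p : ENNReal} {X : Ω → Fin K → E} {Y : Ω → Fin L → E} (hX : MemLp X p μ) (hY : MemLp Y p μ) :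
    MemLp (fun ω => Fin.append (X ω) (Y ω)) p μ :=
  memLp_pi_iff.2 fun j =>
    Fin.addCases (motive := fun j => MemLp (fun ω => Fin.append (X ω) (Y ω) j) p μ)
      (fun a => by simpa using hX.eval a) (fun b => by simpa using hY.eval b) j

theorem MeasureTheory.memLp_top_of_zero_or_one {Z : Ω → ℝ} (hZ : Measurable Z)
    (h01 : ∀ ω, Z ω = 0 ∨ Z ω = 1) : MemLp Z ⊤ μ :=
  memLp_top_of_bound hZ.aestronglyMeasurable 1
    (ae_of_all _ fun ω => by rcases h01 ω with h | h <;> simp [h])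

theorem MeasureTheory.memLp_of_zero_or_one [IsFiniteMeasure μ] {Z : Ω → ℝ} (hZ : Measurable Z)
    (h01 : ∀ ω, Z ω = 0 ∨ Z ω = 1) (p : ENNReal) : MemLp Z p μ :=
  (memLp_top_of_zero_or_one hZ h01).mono_exponent le_top

theorem MeasureTheory.MemLp.select_of_zero_or_one {p : ENNReal} {Z V₁ V₀ : Ω → ℝ}
    (hZ : Measurable Z) (h01 : ∀ ω, Z ω = 0 ∨ Z ω = 1) (h₁ : MemLp V₁ p μ) (h₀ : MemLp V₀ p μ) :
    MemLp (fun ω => Z ω * V₁ ω + (1 - Z ω) * V₀ ω) p μ := by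
  have h01' : ∀ ω, 1 - Z ω = 0 ∨ 1 - Z ω = 1 := fun ω => by
    rcases h01 ω with h | h <;> simp [h]
  exact (h₁.mul (memLp_top_of_zero_or_one hZ h01)).add
    (h₀.mul (memLp_top_of_zero_or_one (measurable_const.sub hZ) h01'))

theorem ProbabilityTheory.measureReal_mul_integral_cond [IsFiniteMeasure μ] (s : Set Ω)
    (f : Ω → ℝ) : μ.real s * ∫ ω, f ω ∂μ[|s] = ∫ ω in s, f ω ∂μ := by
  by_cases hs : μ s = 0
  · simp [measureReal_def, hs, Measure.restrict_eq_zero.2 hs]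
  · rw [cond, integral_smul_measure, ENNReal.toReal_inv, smul_eq_mul, ← mul_assoc,
      measureReal_def, mul_inv_cancel₀ (ENNReal.toReal_ne_zero.2 ⟨hs, measure_ne_top μ s⟩),
      one_mul]

theorem ProbabilityTheory.integral_eq_sum_measureReal_mul_integral_cond {ι : Type*} [Fintype ι]
    [MeasurableSpace ι] [MeasurableSingletonClass ι] [IsFiniteMeasure μ] {C : Ω → ι}
    (hC : Measurable C) {f : ι → Ω → ℝ} (hf : ∀ s, Integrable (f s) μ) :
    ∫ ω, f (C ω) ω ∂μ = ∑ s, μ.real {ω | C ω = s} * ∫ ω, f s ω ∂μ[|{ω | C ω = s}] := by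
  have hCs : ∀ s, MeasurableSet {ω | C ω = s} := fun s => hC (measurableSet_singleton s)
  have hsplit : (fun ω => f (C ω) ω) = fun ω => ∑ s, {ω | C ω = s}.indicator (f s) ω := by
    ext ω
    classical
    simp [Set.indicator_apply]
  rw [hsplit, integral_finsetSum _ fun s _ => (hf s).indicator (hCs s)]
  refine Finset.sum_congr rfl fun s _ => ?_
  rw [integral_indicator (hCs s), measureReal_mul_integral_cond]

theorem ProbabilityTheory.integral_sub_integral_mul_eq_covariance [IsProbabilityMeasure μ]
    {X Y : Ω → ℝ} (hX : MemLp X 2 μ) (hY : MemLp Y 2 μ) :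
    ∫ ω, (X ω - μ[X]) * Y ω ∂μ = cov[X, Y; μ] := by
  have hXc : MemLp (fun ω => X ω - μ[X]) 2 μ := hX.sub (memLp_const _)
  rw [covariance]
  simp_rw [mul_sub]
  have hXcY : Integrable (fun ω => (X ω - μ[X]) * Y ω) μ := hXc.integrable_mul hY
  rw [integral_sub hXcY ((hXc.integrable one_le_two).mul_const _),
    integral_mul_const, integral_sub (hX.integrable one_le_two) (integrable_const _),
    integral_const, probReal_univ, one_smul, sub_self, zero_mul, sub_zero]

theorem ProbabilityTheory.integral_sub_integral_cond_mul_sub_integral_cond {ι : Type*}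
    [Fintype ι] [MeasurableSpace ι] [MeasurableSingletonClass ι] [IsFiniteMeasure μ]
    {C : Ω → ι} (hC : Measurable C) {V W : Ω → ℝ} (hV : MemLp V 2 μ) (hW : MemLp W 2 μ) :
    ∫ ω, (V ω - ∫ ω', V ω' ∂μ[|{ω' | C ω' = C ω}]) *
        (W ω - ∫ ω', W ω' ∂μ[|{ω' | C ω' = C ω}]) ∂μ
      = ∑ s, μ.real {ω | C ω = s} * cov[V, W; μ[|{ω | C ω = s}]] :=
  integral_eq_sum_measureReal_mul_integral_cond hC
    (f := fun s ω => (V ω - ∫ ω', V ω' ∂μ[|{ω' | C ω' = s}]) *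
      (W ω - ∫ ω', W ω' ∂μ[|{ω' | C ω' = s}]))
    fun _ => (hV.sub (memLp_const _)).integrable_mul (hW.sub (memLp_const _))

theorem ProbabilityTheory.integral_sub_integral_cond_mul_comm {ι : Type*} [Fintype ι]
    [MeasurableSpace ι] [MeasurableSingletonClass ι] [IsFiniteMeasure μ] {C : Ω → ι}
    (hC : Measurable C) {V W : Ω → ℝ} (hV : MemLp V 2 μ) (hW : MemLp W 2 μ) :
    ∫ ω, (V ω - ∫ ω', V ω' ∂μ[|{ω' | C ω' = C ω}]) * W ω ∂μ
      = ∫ ω, (W ω - ∫ ω', W ω' ∂μ[|{ω' | C ω' = C ω}]) * V ω ∂μ := by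
  have hint : ∀ {A B : Ω → ℝ} (c : ι → ℝ), MemLp A 2 μ → MemLp B 2 μ → ∀ s,
      Integrable (fun ω => (A ω - c s) * B ω) μ :=
    fun c hA hB s => (hA.sub (memLp_const (c s))).integrable_mul hB
  rw [integral_eq_sum_measureReal_mul_integral_cond hC
      (hint (fun s => ∫ ω', V ω' ∂μ[|{ω' | C ω' = s}]) hV hW),
    integral_eq_sum_measureReal_mul_integral_cond hC
      (hint (fun s => ∫ ω', W ω' ∂μ[|{ω' | C ω' = s}]) hW hV)]
  refine Finset.sum_congr rfl fun s _ => ?_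
  by_cases hs : μ {ω | C ω = s} = 0
  · simp [measureReal_def, hs]
  have := cond_isProbabilityMeasure hs
  rw [integral_sub_integral_mul_eq_covariance (hV.cond _) (hW.cond _),
    integral_sub_integral_mul_eq_covariance (hW.cond _) (hV.cond _), covariance_comm]

theorem ProbabilityTheory.integral_eq_measureReal_of_zero_or_one {Z : Ω → ℝ}
    (hZ : Measurable Z) (h01 : ∀ ω, Z ω = 0 ∨ Z ω = 1) :
    ∫ ω, Z ω ∂μ = μ.real {ω | Z ω = 1} := by
  have hZ_eq : Z = {ω | Z ω = 1}.indicator fun _ => 1 := by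
    ext ω
    rcases h01 ω with h | h <;> simp [h]
  conv_lhs => rw [hZ_eq]
  have h1 : MeasurableSet {ω | Z ω = 1} := hZ (measurableSet_singleton 1)
  rw [integral_indicator_const _ h1, smul_eq_mul, mul_one]

theorem ProbabilityTheory.integral_sub_integral_sq_of_zero_or_one [IsProbabilityMeasure μ]
    {Z : Ω → ℝ} (hZ : Measurable Z) (h01 : ∀ ω, Z ω = 0 ∨ Z ω = 1) :
    ∫ ω, (Z ω - μ[Z]) ^ 2 ∂μ = μ.real {ω | Z ω = 1} * (1 - μ.real {ω | Z ω = 1}) := by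
  have hsq : Z ^ 2 = Z := by
    ext ω
    rcases h01 ω with h | h <;> simp [h]
  rw [← variance_eq_integral hZ.aemeasurable, variance_eq_sub (memLp_of_zero_or_one hZ h01 2), hsq,
    integral_eq_measureReal_of_zero_or_one hZ h01]
  ring

end

theorem inverse_regression_stratified_covariate_adjusted_equivalence_general
    -- (a) sample-level data
    (n K L S : ℕ) (hn : 0 < n)
    (zf : Fin n → ℝ)
    (um : Matrix (Fin n) (Fin (K + L)) ℝ)
    (Hg : Matrix (Fin n) (Fin n) ℝ)
    (βhatSRUA : Fin (K + L) → ℝ)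
    (hβhatSRUA : βhatSRUA = (umᵀ * (1 - Hg) * um)⁻¹ *ᵥ (umᵀ *ᵥ ((1 - Hg) *ᵥ zf)))
    (τhatSRU : Fin (K + L) → ℝ)
    (hτhatSRU : τhatSRU = (zf ⬝ᵥ ((1 - Hg) *ᵥ zf))⁻¹ • (umᵀ *ᵥ ((1 - Hg) *ᵥ zf)))
    (hzz : zf ⬝ᵥ ((1 - Hg) *ᵥ zf) ≠ 0)
    (huuInv : IsUnit (umᵀ * (1 - Hg) * um).det)
    -- (b) population-level data
    {Ω : Type*} [MeasurableSpace Ω] (μ : Measure Ω) [IsProbabilityMeasure μ]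
    (Z : Ω → ℝ) (C : Ω → Fin S) (X : Ω → Fin K → ℝ) (Y1 Y0 : Ω → Fin L → ℝ)
    (hZmeas : Measurable Z) (hCmeas : Measurable C)
    (hZ01 : ∀ ω, Z ω = 0 ∨ Z ω = 1)
    (hXL2 : MemLp X 2 μ) (hY1L2 : MemLp Y1 2 μ) (hY0L2 : MemLp Y0 2 μ)
    (condμ : Fin S → Measure Ω)
    (hcondμ : condμ = fun s => ProbabilityTheory.cond μ {ω | C ω = s})
    (π : Fin S → ℝ) (hπ : π = fun s => (μ {ω | C ω = s}).toReal)
    (hπpos : ∀ s, 0 < π s)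
    (p : Fin S → ℝ) (hp : p = fun s => (condμ s {ω | Z ω = 1}).toReal)
    (hp01 : ∀ s, 0 < p s ∧ p s < 1)
    -- observed outcome and stacked vector U = (Xᵀ, Yᵀ)ᵀ
    (Y : Ω → Fin L → ℝ) (hY : Y = fun ω j => Z ω * Y1 ω j + (1 - Z ω) * Y0 ω j)
    (U : Ω → Fin (K + L) → ℝ)
    (hU : U = fun ω => Fin.append (fun a => X ω a) (fun b => Y ω b))
    -- within-stratum moments
    (mZ : Fin S → ℝ) (hmZ : mZ = fun s => ∫ ω, Z ω ∂(condμ s))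
    (mU : Fin S → Fin (K + L) → ℝ) (hmU : mU = fun s j => ∫ ω, U ω j ∂(condμ s))
    (varZc : Fin S → ℝ) (hvarZc : varZc = fun s => ∫ ω, (Z ω - mZ s) ^ 2 ∂(condμ s))
    (covUc : Fin S → Matrix (Fin (K + L)) (Fin (K + L)) ℝ)
    (hcovUc : covUc = fun s => Matrix.of fun i j =>
      ∫ ω, (U ω i - mU s i) * (U ω j - mU s j) ∂(condμ s))
    (EvarZC : ℝ) (hEvarZC : EvarZC = ∑ s, π s * varZc s)
    (EcovUC : Matrix (Fin (K + L)) (Fin (K + L)) ℝ)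
    (hEcovUC : EcovUC = ∑ s, π s • covUc s)
    -- variance-weighted coefficients of Z from the regressions of U on (G, Z)
    (τSRU : Fin (K + L) → ℝ)
    (hτSRU : τSRU = EvarZC⁻¹ • fun j => ∫ ω, (Z ω - mZ (C ω)) * U ω j ∂μ)
    -- population inverse regression coefficient (Frisch–Waugh–Lovell form)
    (EUtilUtil : Matrix (Fin (K + L)) (Fin (K + L)) ℝ)
    (hEUtilUtil : EUtilUtil = Matrix.of fun i j =>
      ∫ ω, (U ω i - mU (C ω) i) * (U ω j - mU (C ω) j) ∂μ)
    (EUtilZ : Fin (K + L) → ℝ)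
    (hEUtilZ : EUtilZ = fun j => ∫ ω, (U ω j - mU (C ω) j) * Z ω ∂μ)
    (βSRUA : Fin (K + L) → ℝ) (hβSRUA : βSRUA = EUtilUtil⁻¹ *ᵥ EUtilZ) :
    βhatSRUA = ((n : ℝ)⁻¹ * (zf ⬝ᵥ ((1 - Hg) *ᵥ zf))) •
      (((n : ℝ)⁻¹ • (umᵀ * (1 - Hg) * um))⁻¹ *ᵥ τhatSRU) ∧
    βSRUA = EvarZC • (EcovUC⁻¹ *ᵥ τSRU) ∧
    EvarZC = ∑ s, π s * (p s * (1 - p s)) := by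
  have hcondProb : ∀ s, IsProbabilityMeasure (condμ s) := fun s => by
    rw [hcondμ]
    exact cond_isProbabilityMeasure fun h => (hπpos s).ne' (by simp [hπ, h])
  have hEvar : EvarZC = ∑ s, π s * (p s * (1 - p s)) := by
    simp only [hEvarZC, hvarZc, hmZ, hp]
    exact Finset.sum_congr rfl fun s _ =>
      congrArg (π s * ·) (integral_sub_integral_sq_of_zero_or_one hZmeas hZ01)
  have hEvar_ne : EvarZC ≠ 0 := by
    have : Nonempty (Fin S) := ⟨C (nonempty_of_isProbabilityMeasure μ).some⟩
    rw [hEvar]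
    exact (Finset.sum_pos (fun s _ => mul_pos (hπpos s)
      (mul_pos (hp01 s).1 (sub_pos.2 (hp01 s).2))) univ_nonempty).ne'
  have hU2 : MemLp U 2 μ := hU ▸ hXL2.finAppend (hY ▸ memLp_pi_iff.2 fun b =>
    (hY1L2.eval b).select_of_zero_or_one hZmeas hZ01 (hY0L2.eval b))
  have hEE : EUtilUtil = EcovUC := by
    ext i j
    simp only [hEUtilUtil, hEcovUC, hcovUc, hπ, hcondμ, hmU, Matrix.sum_apply,
      Matrix.smul_apply, of_apply, smul_eq_mul]
    exact integral_sub_integral_cond_mul_sub_integral_cond hCmeas (hU2.eval i) (hU2.eval j)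
  have hEZ : EUtilZ = fun j => ∫ ω, (Z ω - mZ (C ω)) * U ω j ∂μ := by
    ext j
    simp only [hEUtilZ, hmU, hmZ, hcondμ]
    exact integral_sub_integral_cond_mul_comm hCmeas (hU2.eval j)
      (memLp_of_zero_or_one hZmeas hZ01 2)
  refine ⟨?_, ?_, hEvar⟩
  · rw [hβhatSRUA, hτhatSRU]
    exact inv_mulVec_eq_smul_inv_smul_mulVec huuInv _
      (inv_ne_zero (Nat.cast_ne_zero.2 hn.ne')) hzz
  · rw [hβSRUA, hEE, hEZ, hτSRU, mulVec_smul, smul_smul, mul_inv_cancel₀ hEvar_ne, one_smul]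

/-- Proposition S2: covariate-adjusted equivalence in stratified randomized experiments.
(a) the sample identity
`β̂_SRU,A = {n⁻¹zᵀ(I−H_g)z}{n⁻¹uᵀ(I−H_g)u}⁻¹ τ̂_SRU`;
(b) under stratified randomization,
`β_SRU,A = E{var(Z|C)} E{cov(U|C)}⁻¹ τ_SRU` with `E{var(Z|C)} = Σ_s π_s p_[s](1−p_[s])`. -/
theorem inverse_regression_stratified_covariate_adjusted_equivalence
    -- (a) sample-level data
    (n K L S : ℕ) (hn : 0 < n)
    (zf : Fin n → ℝ) (cf : Fin n → Fin S)
    (xm : Matrix (Fin n) (Fin K) ℝ) (ym : Matrix (Fin n) (Fin L) ℝ)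
    (hzf01 : ∀ i, zf i = 0 ∨ zf i = 1)
    (hstrata : ∀ s : Fin S, ∃ i, cf i = s)
    (um : Matrix (Fin n) (Fin (K + L)) ℝ)
    (hum : um = Matrix.of fun i k => Fin.append (fun a => xm i a) (fun b => ym i b) k)
    (g : Matrix (Fin n) (Fin S) ℝ)
    (hg : g = Matrix.of fun i s => if cf i = s then (1 : ℝ) else 0)
    (Hg : Matrix (Fin n) (Fin n) ℝ) (hHg : Hg = g * (gᵀ * g)⁻¹ * gᵀ)
    (βhatSRUA : Fin (K + L) → ℝ)
    (hβhatSRUA : βhatSRUA = (umᵀ * (1 - Hg) * um)⁻¹ *ᵥ (umᵀ *ᵥ ((1 - Hg) *ᵥ zf)))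
    (τhatSRU : Fin (K + L) → ℝ)
    (hτhatSRU : τhatSRU = (zf ⬝ᵥ ((1 - Hg) *ᵥ zf))⁻¹ • (umᵀ *ᵥ ((1 - Hg) *ᵥ zf)))
    (hzz : zf ⬝ᵥ ((1 - Hg) *ᵥ zf) ≠ 0)
    (huuInv : IsUnit (umᵀ * (1 - Hg) * um).det)
    -- (b) population-level data
    {Ω : Type*} [MeasurableSpace Ω] (μ : Measure Ω) [IsProbabilityMeasure μ]
    (Z : Ω → ℝ) (C : Ω → Fin S) (X : Ω → Fin K → ℝ) (Y1 Y0 : Ω → Fin L → ℝ)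
    (hZmeas : Measurable Z) (hCmeas : Measurable C) (hXmeas : Measurable X)
    (hY1meas : Measurable Y1) (hY0meas : Measurable Y0)
    (hZ01 : ∀ ω, Z ω = 0 ∨ Z ω = 1)
    (hXL2 : MemLp X 2 μ) (hY1L2 : MemLp Y1 2 μ) (hY0L2 : MemLp Y0 2 μ)
    (condμ : Fin S → Measure Ω)
    (hcondμ : condμ = fun s => ProbabilityTheory.cond μ {ω | C ω = s})
    -- stratified randomization: Z ⫫ (Y(1), Y(0), X) given C
    (hindep : ∀ s, IndepFun Z (fun ω => (Y1 ω, Y0 ω, X ω)) (condμ s))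
    (π : Fin S → ℝ) (hπ : π = fun s => (μ {ω | C ω = s}).toReal)
    (hπpos : ∀ s, 0 < π s)
    (p : Fin S → ℝ) (hp : p = fun s => (condμ s {ω | Z ω = 1}).toReal)
    (hp01 : ∀ s, 0 < p s ∧ p s < 1)
    -- observed outcome and stacked vector U = (Xᵀ, Yᵀ)ᵀ
    (Y : Ω → Fin L → ℝ) (hY : Y = fun ω j => Z ω * Y1 ω j + (1 - Z ω) * Y0 ω j)
    (U : Ω → Fin (K + L) → ℝ)
    (hU : U = fun ω => Fin.append (fun a => X ω a) (fun b => Y ω b))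
    -- within-stratum moments
    (mZ : Fin S → ℝ) (hmZ : mZ = fun s => ∫ ω, Z ω ∂(condμ s))
    (mU : Fin S → Fin (K + L) → ℝ) (hmU : mU = fun s j => ∫ ω, U ω j ∂(condμ s))
    (varZc : Fin S → ℝ) (hvarZc : varZc = fun s => ∫ ω, (Z ω - mZ s) ^ 2 ∂(condμ s))
    (covUc : Fin S → Matrix (Fin (K + L)) (Fin (K + L)) ℝ)
    (hcovUc : covUc = fun s => Matrix.of fun i j =>
      ∫ ω, (U ω i - mU s i) * (U ω j - mU s j) ∂(condμ s))
    (EvarZC : ℝ) (hEvarZC : EvarZC = ∑ s, π s * varZc s)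
    (EcovUC : Matrix (Fin (K + L)) (Fin (K + L)) ℝ)
    (hEcovUC : EcovUC = ∑ s, π s • covUc s)
    (hEcovUCInv : IsUnit EcovUC.det)
    -- variance-weighted coefficients of Z from the regressions of U on (G, Z)
    (τSRU : Fin (K + L) → ℝ)
    (hτSRU : τSRU = EvarZC⁻¹ • fun j => ∫ ω, (Z ω - mZ (C ω)) * U ω j ∂μ)
    -- population inverse regression coefficient (Frisch–Waugh–Lovell form)
    (EUtilUtil : Matrix (Fin (K + L)) (Fin (K + L)) ℝ)
    (hEUtilUtil : EUtilUtil = Matrix.of fun i j =>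
      ∫ ω, (U ω i - mU (C ω) i) * (U ω j - mU (C ω) j) ∂μ)
    (EUtilZ : Fin (K + L) → ℝ)
    (hEUtilZ : EUtilZ = fun j => ∫ ω, (U ω j - mU (C ω) j) * Z ω ∂μ)
    (βSRUA : Fin (K + L) → ℝ) (hβSRUA : βSRUA = EUtilUtil⁻¹ *ᵥ EUtilZ) :
    βhatSRUA = ((n : ℝ)⁻¹ * (zf ⬝ᵥ ((1 - Hg) *ᵥ zf))) •
      (((n : ℝ)⁻¹ • (umᵀ * (1 - Hg) * um))⁻¹ *ᵥ τhatSRU) ∧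
    βSRUA = EvarZC • (EcovUC⁻¹ *ᵥ τSRU) ∧
    EvarZC = ∑ s, π s * (p s * (1 - p s)) :=
  inverse_regression_stratified_covariate_adjusted_equivalence_general n K L S hn zf um Hg βhatSRUA
    hβhatSRUA τhatSRU hτhatSRU hzz huuInv μ Z C X Y1 Y0 hZmeas hCmeas hZ01 hXL2 hY1L2 hY0L2 condμ
    hcondμ π hπ hπpos p hp hp01 Y hY U hU mZ hmZ mU hmU varZc hvarZc covUc hcovUc EvarZC hEvarZC
    EcovUC hEcovUC τSRU hτSRU EUtilUtil hEUtilUtil EUtilZ hEUtilZ βSRUA hβSRUA
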